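/- The tracial geometric mean is symmetric: for all positive semidefinite ℓ×ℓ complex matrices X and Y, tgm(X,Y) = tgm(Y,X). -/

import Mathlib

open Matrix
open scoped ComplexOrder

namespace Matrix.PosSemidef

/-- The positive semidefinite square root, as `Matrix.PosSemidef.sqrt` was defined in the older Mathlib. -/
noncomputable def sqrt {n 𝕜 : Type*} [Fintype n] [DecidableEq n] [RCLike 𝕜] {A : Matrix n n 𝕜}
    (hA : A.PosSemidef) : Matrix n n 𝕜 :=
  (hA.1.eigenvectorUnitary : Matrix n n 𝕜) * diagonal ((↑) ∘ (√·) ∘ hA.1.eigenvalues) *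
    (star (hA.1.eigenvectorUnitary : Matrix n n 𝕜))

lemma posSemidef_sqrt {n 𝕜 : Type*} [Fintype n] [DecidableEq n] [RCLike 𝕜] {A : Matrix n n 𝕜}
    (hA : A.PosSemidef) : PosSemidef hA.sqrt := by
  apply PosSemidef.mul_mul_conjTranspose_same
  refine posSemidef_diagonal_iff.mpr fun i ↦ ?_
  rw [Function.comp_apply, RCLike.nonneg_iff]
  constructor
  · simp only [Function.comp_apply, RCLike.ofReal_re]; exact Real.sqrt_nonneg _
  · simp only [Function.comp_apply, RCLike.ofReal_im]

end Matrix.PosSemidef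

/-- The product `√X * Y * √X` is positive semidefinite. -/
theorem sqrt_mul_mul_sqrt_posSemidef {n : Type*} [Fintype n] [DecidableEq n]
    {X Y : Matrix n n ℂ} (hX : X.PosSemidef) (hY : Y.PosSemidef) :
    (hX.sqrt * Y * hX.sqrt).PosSemidef := by
  have h := hY.conjTranspose_mul_mul_same (B := hX.sqrt)
  rwa [hX.posSemidef_sqrt.isHermitian.eq] at h

/-- The tracial geometric mean `tgm(X,Y) = trace √(√X·Y·√X)`. -/
noncomputable def tgm {n : Type*} [Fintype n] [DecidableEq n]
    {X Y : Matrix n n ℂ} (hX : X.PosSemidef) (hY : Y.PosSemidef) : ℝ :=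
  ((sqrt_mul_mul_sqrt_posSemidef hX hY).sqrt.trace).re

/-! Writing `X = √X √X` and `Y = √Y √Y`, the matrices `√X Y √X` and `√Y X √Y` are `S T` and `T S`
for `S = √X √Y`, `T = √Y √X`, so they have the same characteristic polynomial. Being Hermitian,
they then have the same eigenvalues, and the trace of the square root of a positive semidefinite
matrix is the sum of the square roots of its eigenvalues. -/

namespace Matrix.PosSemidef

variable {n 𝕜 : Type*} [Fintype n] [DecidableEq n] [RCLike 𝕜] {A : Matrix n n 𝕜}

lemma sqrt_eq_cfc (hA : A.PosSemidef) : hA.sqrt = cfc Real.sqrt A := by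
  rw [hA.1.cfc_eq, IsHermitian.cfc, Unitary.conjStarAlgAut_apply]
  rfl

lemma sqrt_mul_self (hA : A.PosSemidef) : hA.sqrt * hA.sqrt = A := by
  have hspec : ∀ x ∈ spectrum ℝ A, 0 ≤ x := by
    rw [hA.1.spectrum_real_eq_range_eigenvalues]
    rintro - ⟨i, rfl⟩
    exact hA.eigenvalues_nonneg i
  rw [sqrt_eq_cfc, ← cfc_mul Real.sqrt Real.sqrt A]
  conv_rhs => rw [← cfc_id' ℝ A hA.1.isSelfAdjoint]
  exact cfc_congr fun x hx => Real.mul_self_sqrt (hspec x hx)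

lemma trace_sqrt (hA : A.PosSemidef) : hA.sqrt.trace = ∑ i, (√(hA.1.eigenvalues i) : 𝕜) := by
  rw [sqrt, trace_mul_cycle, Unitary.coe_star_mul_self, Matrix.one_mul, trace_diagonal]
  rfl

lemma trace_sqrt_eq_of_charpoly_eq {B : Matrix n n 𝕜} (hA : A.PosSemidef) (hB : B.PosSemidef)
    (h : A.charpoly = B.charpoly) : hA.sqrt.trace = hB.sqrt.trace := by
  rw [trace_sqrt, trace_sqrt, (hA.1.eigenvalues_eq_eigenvalues_iff hB.1).2 h]

end Matrix.PosSemidef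

lemma Matrix.charpoly_mul_mul_self_mul_comm {n R : Type*} [Fintype n] [DecidableEq n] [CommRing R]
    (S T : Matrix n n R) : (S * (T * T) * S).charpoly = (T * (S * S) * T).charpoly :=
  calc (S * (T * T) * S).charpoly = (S * T * (T * S)).charpoly := by simp only [Matrix.mul_assoc]
    _ = (T * S * (S * T)).charpoly := charpoly_mul_comm _ _
    _ = (T * (S * S) * T).charpoly := by simp only [Matrix.mul_assoc]

/-- The tracial geometric mean is symmetric: `tgm(X,Y) = tgm(Y,X)`. -/
theorem tgm_comm {ℓ : ℕ} {X Y : Matrix (Fin ℓ) (Fin ℓ) ℂ}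
    (hX : X.PosSemidef) (hY : Y.PosSemidef) :
    tgm hX hY = tgm hY hX := by
  have h := charpoly_mul_mul_self_mul_comm hX.sqrt hY.sqrt
  rw [hX.sqrt_mul_self, hY.sqrt_mul_self] at h
  unfold tgm
  rw [PosSemidef.trace_sqrt_eq_of_charpoly_eq _ _ h]
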